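/- Let ρ and σ be positive semidefinite d×d complex matrices and let E be a completely positive trace-nonincreasing (CPTNI) map from d×d to d'×d' complex matrices. Then ‖ρ − σ‖₁ ≥ ‖E(ρ) − E(σ)‖₁. -/

import Mathlib

open scoped BigOperators ComplexOrder Matrix

/-- The trace norm `‖A‖₁ = Tr √(AᴴA)` of a square complex matrix. -/
noncomputable def traceNorm {d : ℕ} (A : Matrix (Fin d) (Fin d) ℂ) : ℝ :=
  (((Matrix.posSemidef_conjTranspose_mul_self A).1.eigenvectorUnitary : Matrix (Fin d) (Fin d) ℂ) *
    Matrix.diagonal (((↑) : ℝ → ℂ) ∘ Real.sqrt ∘ (Matrix.posSemidef_conjTranspose_mul_self A).1.eigenvalues) *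
    (star (Matrix.posSemidef_conjTranspose_mul_self A).1.eigenvectorUnitary : Matrix (Fin d) (Fin d) ℂ)).trace.re

/-!
For Hermitian `A = A⁺ - A⁻`, `‖A‖₁ = Tr |A| = Tr (A⁺ + A⁻)` dominates `Re Tr (S A)` for every
`S` in the operator interval `[-1, 1]`, with equality at `S = sign A`. The dual map `E†(S) = Σ Kᵢᴴ S Kᵢ` sends `[-1, 1]`
into itself because `E†(1) ≤ 1`, so with `S = sign (E A)` we get
`‖E A‖₁ = Re Tr (S · E A) = Re Tr (E†(S) · A) ≤ ‖A‖₁`. Apply this to `A = ρ - σ`.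
-/

open scoped MatrixOrder

namespace Matrix

variable {n 𝕜 : Type*} [Fintype n] [DecidableEq n] [RCLike 𝕜]

lemma trace_mul_nonneg {X Y : Matrix n n 𝕜} (hX : 0 ≤ X) (hY : 0 ≤ Y) : 0 ≤ (X * Y).trace := by
  have hsq : CFC.sqrt X * CFC.sqrt X = X := CFC.sqrt_mul_sqrt_self X
  calc (0 : 𝕜) ≤ (CFC.sqrt X * Y * CFC.sqrt X).trace :=
        (nonneg_iff_posSemidef.mp (conjugate_nonneg_of_nonneg hY (CFC.sqrt_nonneg X))).trace_nonneg
    _ = (X * Y).trace := by rw [trace_mul_cycle, hsq]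

lemma IsHermitian.re_trace_mul_le_re_trace_abs {A S : Matrix n n 𝕜} (hA : A.IsHermitian)
    (hS : S ∈ Set.Icc (-1) 1) : RCLike.re (S * A).trace ≤ RCLike.re (CFC.abs A).trace := by
  have hpos : 0 ≤ RCLike.re ((1 - S) * A⁺).trace :=
    (RCLike.nonneg_iff.mp (trace_mul_nonneg (sub_nonneg.mpr hS.2) (CFC.posPart_nonneg A))).1
  have hneg : 0 ≤ RCLike.re ((1 + S) * A⁻).trace :=
    (RCLike.nonneg_iff.mp
      (trace_mul_nonneg (neg_le_iff_add_nonneg'.mp hS.1) (CFC.negPart_nonneg A))).1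
  rw [← CFC.posPart_add_negPart A hA]
  conv_lhs => rw [← CFC.posPart_sub_negPart A hA]
  simp only [sub_mul, add_mul, one_mul, mul_sub, trace_sub, trace_add, map_sub, map_add] at *
  linarith

lemma IsHermitian.exists_mem_Icc_mul_eq_abs {A : Matrix n n 𝕜} (hA : A.IsHermitian) :
    ∃ S ∈ Set.Icc (-1 : Matrix n n 𝕜) 1, S * A = CFC.abs A := by
  set sgn : ℝ → ℝ := fun x => (SignType.sign x : ℝ)
  -- `sgn` is discontinuous, but only its values on the finite spectrum matter
  have hsgn : ContinuousOn sgn (spectrum ℝ A) := A.finite_real_spectrum.continuousOn _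
  refine ⟨cfc sgn A, ⟨?_, ?_⟩, ?_⟩
  · simpa using algebraMap_le_cfc sgn (-1) A fun x _ =>
      show (-1 : ℝ) ≤ SignType.sign x by cases SignType.sign x <;> simp
  · exact cfc_le_one sgn A fun x _ =>
      show (SignType.sign x : ℝ) ≤ 1 by cases SignType.sign x <;> simp
  · rw [CFC.abs_eq_cfc_norm A hA]
    conv_lhs => enter [2]; rw [← cfc_id' ℝ A]
    rw [← cfc_mul sgn (fun x => x) A]
    exact cfc_congr fun x _ => sign_mul_self x

end Matrix

lemma traceNorm_eq_re_trace_abs {d : ℕ} (A : Matrix (Fin d) (Fin d) ℂ) :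
    traceNorm A = (CFC.abs A).trace.re := by
  have hAA : 0 ≤ star A * A :=
    Matrix.nonneg_iff_posSemidef.mpr (Matrix.posSemidef_conjTranspose_mul_self A)
  rw [CFC.abs, CFC.sqrt_eq_real_sqrt _ hAA, cfcₙ_eq_cfc]
  exact congrArg (fun M => M.trace.re)
    ((Matrix.posSemidef_conjTranspose_mul_self A).1.cfc_eq _).symm

namespace Matrix

variable {ι m n 𝕜 : Type*} [Fintype ι] [Fintype n] [RCLike 𝕜]

def krausMap (K : ι → Matrix m n 𝕜) : Matrix n n 𝕜 →ₗ[𝕜] Matrix m m 𝕜 where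
  toFun X := ∑ i, K i * X * (K i)ᴴ
  map_add' X Y := by simp only [Matrix.mul_add, Matrix.add_mul, Finset.sum_add_distrib]
  map_smul' c X := by simp [Finset.smul_sum]

variable (K : ι → Matrix m n 𝕜)

lemma krausMap_apply (X : Matrix n n 𝕜) : krausMap K X = ∑ i, K i * X * (K i)ᴴ := rfl

lemma IsHermitian.krausMap {A : Matrix n n 𝕜} (hA : A.IsHermitian) :
    (krausMap K A).IsHermitian :=
  isSelfAdjoint_sum _ fun i _ => isHermitian_mul_mul_conjTranspose (K i) hA

variable [Fintype m]

lemma krausMap_nonneg {X : Matrix n n 𝕜} (hX : 0 ≤ X) : 0 ≤ krausMap K X :=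
  Finset.sum_nonneg fun i _ =>
    nonneg_iff_posSemidef.mpr ((nonneg_iff_posSemidef.mp hX).mul_mul_conjTranspose_same (K i))

lemma krausMap_mono : Monotone (krausMap K) := fun X Y h => by
  simpa using krausMap_nonneg K (sub_nonneg.mpr h)

lemma trace_mul_krausMap (S : Matrix m m 𝕜) (X : Matrix n n 𝕜) :
    (S * krausMap K X).trace = (krausMap (fun i => (K i)ᴴ) S * X).trace := by
  simp only [krausMap_apply, conjTranspose_conjTranspose, Matrix.mul_sum, Matrix.sum_mul,
    trace_sum]
  refine Finset.sum_congr rfl fun i _ => ?_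
  rw [← Matrix.mul_assoc, trace_mul_cycle]
  simp only [Matrix.mul_assoc]

lemma krausMap_mem_Icc [DecidableEq m] [DecidableEq n] (hK : krausMap K 1 ≤ 1)
    {S : Matrix n n 𝕜} (hS : S ∈ Set.Icc (-1) 1) : krausMap K S ∈ Set.Icc (-1) 1 :=
  ⟨calc -1 ≤ -krausMap K 1 := neg_le_neg hK
      _ = krausMap K (-1) := (map_neg _ _).symm
      _ ≤ krausMap K S := krausMap_mono K hS.1,
    (krausMap_mono K hS.2).trans hK⟩

end Matrix

open Matrix in
theorem traceNorm_krausMap_le {ι : Type*} [Fintype ι] {d d' : ℕ}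
    (K : ι → Matrix (Fin d') (Fin d) ℂ) (hK : krausMap (fun i => (K i)ᴴ) 1 ≤ 1)
    {A : Matrix (Fin d) (Fin d) ℂ} (hA : A.IsHermitian) :
    traceNorm (krausMap K A) ≤ traceNorm A := by
  obtain ⟨S, hS, hSA⟩ := (hA.krausMap K).exists_mem_Icc_mul_eq_abs
  calc traceNorm (krausMap K A) = RCLike.re (S * krausMap K A).trace := by
        rw [traceNorm_eq_re_trace_abs, hSA, RCLike.re_to_complex]
    _ = RCLike.re (krausMap (fun i => (K i)ᴴ) S * A).trace := by rw [trace_mul_krausMap]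
    _ ≤ RCLike.re (CFC.abs A).trace :=
        hA.re_trace_mul_le_re_trace_abs (krausMap_mem_Icc _ hK hS)
    _ = traceNorm A := by rw [traceNorm_eq_re_trace_abs, RCLike.re_to_complex]

/-- Data-processing for the trace norm under a completely positive
trace-nonincreasing map `E(X) = Σ K_i X K_iᴴ` (with `I − Σ K_iᴴ K_i ⪰ 0`):
for positive semidefinite `ρ, σ`, `‖ρ − σ‖₁ ≥ ‖E(ρ) − E(σ)‖₁`. -/
theorem traceNorm_cptni_contraction
    {d d' m : ℕ}
    (K : Fin m → Matrix (Fin d') (Fin d) ℂ)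
    (hK : ((1 : Matrix (Fin d) (Fin d) ℂ) - ∑ i, (K i)ᴴ * K i).PosSemidef)
    (E : Matrix (Fin d) (Fin d) ℂ → Matrix (Fin d') (Fin d') ℂ)
    (hE : E = fun X => ∑ i, K i * X * (K i)ᴴ)
    (ρ σ : Matrix (Fin d) (Fin d) ℂ)
    (hρ : ρ.PosSemidef) (hσ : σ.PosSemidef) :
    traceNorm (ρ - σ) ≥ traceNorm (E ρ - E σ) := by
  have hK' : Matrix.krausMap (fun i => (K i)ᴴ) 1 ≤ 1 := by
    simpa [Matrix.le_iff, Matrix.krausMap_apply] using hK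
  have hEsub : E ρ - E σ = Matrix.krausMap K (ρ - σ) := by
    rw [hE, map_sub]
    rfl
  rw [ge_iff_le, hEsub]
  exact traceNorm_krausMap_le K hK' (hρ.1.sub hσ.1)
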